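/- Let π be a partial involution matrix of rank n−k with zero rows at positions i_1 < ... < i_k, and let σ̃ ∈ S_{n−k} be the involution obtained by deleting the zero rows and columns of π. Then 𝔇(π) = (exc(σ̃) + inv(σ̃))/2 + Σ_{t=1}^{k} (n + 1 − i_t), where 𝔇(π) counts pairs (i,j) with 1 ≤ i ≤ j ≤ n such that r_{ij} = r_{i-1,j-1} (with r_{0,m} := 0) in the rank-control matrix (r_{ij}) of π. -/
import Mathlib

open Matrix

/-- The upper-left `k × l` corner of a matrix (truncated at the matrix size). -/
def cornerSub {F : Type*} {n m : ℕ} (X : Matrix (Fin n) (Fin m) F) (k l : ℕ) :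
    Matrix (Fin (min k n)) (Fin (min l m)) F :=
  X.submatrix (Fin.castLE (min_le_right k n)) (Fin.castLE (min_le_right l m))

/-- The `(k, l)` entry of the rank-control matrix. -/
noncomputable def rcEntry {F : Type*} [Field F] {n m : ℕ}
    (X : Matrix (Fin n) (Fin m) F) (k l : ℕ) : ℕ :=
  (cornerSub X k l).rank

/-- The parameter `𝔇(X)`: the number of pairs `(i, j)` with `1 ≤ i ≤ j ≤ n` such
that `r i j = r (i-1) (j-1)` in the rank-control matrix of `X` (the convention
`r 0 m = 0` holds automatically since an empty matrix has rank `0`). -/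
noncomputable def Dpar {F : Type*} [Field F] {n : ℕ}
    (X : Matrix (Fin n) (Fin n) F) : ℕ :=
  (((Finset.Icc 1 n) ×ˢ (Finset.Icc 1 n)).filter
    (fun p => p.1 ≤ p.2 ∧ rcEntry X p.1 p.2 = rcEntry X (p.1 - 1) (p.2 - 1))).card

/-- A partial permutation matrix. -/
def IsPartialPermMatrix {n : ℕ} (X : Matrix (Fin n) (Fin n) ℚ) : Prop :=
  (∀ i j, X i j = 0 ∨ X i j = 1) ∧
    (∀ i, {j | X i j = 1}.Subsingleton) ∧
    (∀ j, {i | X i j = 1}.Subsingleton)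

/-- The number of excedances of a permutation. -/
def excNum {m : ℕ} (σ : Equiv.Perm (Fin m)) : ℕ :=
  (Finset.univ.filter fun i : Fin m => i < σ i).card

/-- The number of inversions of a permutation. -/
def invNum {m : ℕ} (σ : Equiv.Perm (Fin m)) : ℕ :=
  (Finset.univ.filter fun p : Fin m × Fin m => p.1 < p.2 ∧ σ p.2 < σ p.1).card

section Aux

/-- The rank of a partial permutation matrix equals its number of ones. -/
lemma rank_eq_card_ones {a b : ℕ} (X : Matrix (Fin a) (Fin b) ℚ)
    (h01 : ∀ i j, X i j = 0 ∨ X i j = 1)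
    (hrow : ∀ i, {j | X i j = 1}.Subsingleton)
    (hcol : ∀ j, {i | X i j = 1}.Subsingleton) :
    X.rank = (Finset.univ.filter fun p : Fin a × Fin b => X p.1 p.2 = 1).card := by
  classical
  set d : Fin a → ℚ := fun i => ∑ j, X i j with hd
  have hdiag : X * Xᵀ = diagonal d := by
    ext i i'
    by_cases h : i = i'
    · subst h
      simp only [mul_apply, transpose_apply, diagonal_apply_eq, hd]
      refine Finset.sum_congr rfl fun j _ => ?_
      rcases h01 i j with h | h <;> simp [h]
    · simp only [mul_apply, transpose_apply, diagonal_apply_ne _ h]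
      refine Finset.sum_eq_zero fun j _ => ?_
      rcases h01 i j with h1 | h1
      · simp [h1]
      rcases h01 i' j with h2 | h2
      · simp [h2]
      · exact absurd (hcol j h1 h2) h
  have hrk : X.rank = Fintype.card {i // d i ≠ 0} := by
    rw [← Matrix.rank_self_mul_transpose, hdiag, Matrix.rank_diagonal]
  have hdcard : ∀ i, d i = ((Finset.univ.filter fun j => X i j = 1).card : ℚ) := by
    intro i
    rw [hd]
    rw [Finset.card_filter, Nat.cast_sum]
    refine Finset.sum_congr rfl fun j _ => ?_
    rcases h01 i j with h | h <;> simp [h]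
  have hle1 : ∀ i, (Finset.univ.filter fun j => X i j = 1).card ≤ 1 := by
    intro i
    refine Finset.card_le_one.2 fun x hx y hy => ?_
    simp only [Finset.mem_filter] at hx hy
    exact hrow i hx.2 hy.2
  rw [hrk, Fintype.card_subtype]
  rw [Finset.card_filter (fun p : Fin a × Fin b => X p.1 p.2 = 1), Fintype.sum_prod_type]
  rw [Finset.card_filter]
  refine Finset.sum_congr rfl fun i _ => ?_
  have h1 := hdcard i
  have h2 := hle1 i
  rw [← Finset.card_filter]
  rcases Nat.le_one_iff_eq_zero_or_eq_one.mp h2 with h | h <;> rw [h] at h1 ⊢ <;>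
    simp [h1]

/-- The rank-control entry counts the ones in the corner. -/
lemma rcEntry_eq_card {n : ℕ} (π : Matrix (Fin n) (Fin n) ℚ)
    (h01 : ∀ i j, π i j = 0 ∨ π i j = 1)
    (hrow : ∀ i, {j | π i j = 1}.Subsingleton)
    (hcol : ∀ j, {i | π i j = 1}.Subsingleton) (k l : ℕ) :
    rcEntry π k l = (Finset.univ.filter fun p : Fin n × Fin n =>
      (p.1 : ℕ) < k ∧ (p.2 : ℕ) < l ∧ π p.1 p.2 = 1).card := by
  classical
  have hc01 : ∀ i j, cornerSub π k l i j = 0 ∨ cornerSub π k l i j = 1 :=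
    fun i j => h01 _ _
  have hcrow : ∀ i, {j | cornerSub π k l i j = 1}.Subsingleton := by
    intro i x hx y hy
    exact Fin.castLE_injective _ (hrow (Fin.castLE _ i) hx hy)
  have hccol : ∀ j, {i | cornerSub π k l i j = 1}.Subsingleton := by
    intro j x hx y hy
    exact Fin.castLE_injective _ (hcol (Fin.castLE _ j) hx hy)
  rw [rcEntry, rank_eq_card_ones _ hc01 hcrow hccol]
  refine Finset.card_bij'
    (fun p _ => (Fin.castLE (min_le_right k n) p.1, Fin.castLE (min_le_right l n) p.2))
    (fun p hp => (⟨p.1, lt_min (by simp at hp; exact hp.1) p.1.isLt⟩,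
                  ⟨p.2, lt_min (by simp at hp; exact hp.2.1) p.2.isLt⟩))
    ?_ ?_ ?_ ?_
  · intro p hp
    simp only [Finset.mem_filter, Finset.mem_univ, true_and] at hp ⊢
    exact ⟨lt_of_lt_of_le p.1.isLt (min_le_left _ _),
           lt_of_lt_of_le p.2.isLt (min_le_left _ _), hp⟩
  · intro p hp
    simp only [Finset.mem_filter, Finset.mem_univ, true_and] at hp ⊢
    exact hp.2.2
  · intro p hp; rfl
  · intro p hp; rfl

/-- One step of the rank-control matrix. -/
lemma rc_step {n : ℕ} (π : Matrix (Fin n) (Fin n) ℚ)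
    (h01 : ∀ i j, π i j = 0 ∨ π i j = 1)
    (hrow : ∀ i, {j | π i j = 1}.Subsingleton)
    (hcol : ∀ j, {i | π i j = 1}.Subsingleton) (a b : Fin n) :
    rcEntry π ((a : ℕ) + 1) ((b : ℕ) + 1) = rcEntry π a b ↔
      ((∀ c : Fin n, (c : ℕ) ≤ (b : ℕ) → π a c = 0) ∧
       (∀ c : Fin n, (c : ℕ) ≤ (a : ℕ) → π c b = 0)) := by
  classical
  rw [rcEntry_eq_card π h01 hrow hcol, rcEntry_eq_card π h01 hrow hcol]
  set A := (Finset.univ.filter fun p : Fin n × Fin n =>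
      (p.1 : ℕ) < (a : ℕ) + 1 ∧ (p.2 : ℕ) < (b : ℕ) + 1 ∧ π p.1 p.2 = 1) with hA
  set B := (Finset.univ.filter fun p : Fin n × Fin n =>
      (p.1 : ℕ) < (a : ℕ) ∧ (p.2 : ℕ) < (b : ℕ) ∧ π p.1 p.2 = 1) with hB
  have hBA : B ⊆ A := by
    intro p hp
    simp only [hB, Finset.mem_filter, Finset.mem_univ, true_and] at hp
    simp only [hA, Finset.mem_filter, Finset.mem_univ, true_and]
    exact ⟨by omega, by omega, hp.2.2⟩
  constructor
  · intro hcard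
    have hEq : B = A := Finset.eq_of_subset_of_card_le hBA (le_of_eq hcard)
    constructor
    · intro c hc
      rcases h01 a c with h | h
      · exact h
      · exfalso
        have hmem : (a, c) ∈ A := by
          simp only [hA, Finset.mem_filter, Finset.mem_univ, true_and]
          exact ⟨by omega, by omega, h⟩
        rw [← hEq] at hmem
        simp only [hB, Finset.mem_filter, Finset.mem_univ, true_and] at hmem
        omega
    · intro c hc
      rcases h01 c b with h | h
      · exact h
      · exfalso
        have hmem : (c, b) ∈ A := by
          simp only [hA, Finset.mem_filter, Finset.mem_univ, true_and]
          exact ⟨by omega, by omega, h⟩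
        rw [← hEq] at hmem
        simp only [hB, Finset.mem_filter, Finset.mem_univ, true_and] at hmem
        omega
  · rintro ⟨hr, hc⟩
    have hAB : A ⊆ B := by
      intro p hp
      simp only [hA, Finset.mem_filter, Finset.mem_univ, true_and] at hp
      obtain ⟨h1, h2, h3⟩ := hp
      simp only [hB, Finset.mem_filter, Finset.mem_univ, true_and]
      have hp1 : (p.1 : ℕ) ≠ (a : ℕ) := by
        intro h
        have : p.1 = a := Fin.ext h
        rw [this] at h3
        rw [hr p.2 (by omega)] at h3
        norm_num at h3
      have hp2 : (p.2 : ℕ) ≠ (b : ℕ) := by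
        intro h
        have : p.2 = b := Fin.ext h
        rw [this] at h3
        rw [hc p.1 (by omega)] at h3
        norm_num at h3
      exact ⟨by omega, by omega, h3⟩
    exact le_antisymm (Finset.card_le_card hAB) (Finset.card_le_card hBA)

end Aux

theorem stmt15 {n k : ℕ} (hk : k ≤ n) (π : Matrix (Fin n) (Fin n) ℚ)
    (hperm : IsPartialPermMatrix π) (hsym : π.IsSymm)
    (hrank : π.rank = n - k)
    -- `z` enumerates the zero rows (columns) of `π` in increasing order
    (z : Fin k → Fin n) (hzmono : StrictMono z)
    (hzero : ∀ i : Fin n, (∀ j, π i j = 0) ↔ i ∈ Set.range z)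
    -- `e` enumerates the nonzero rows in increasing order
    (e : Fin (n - k) → Fin n) (hemono : StrictMono e)
    (herange : Set.range e = (Set.range z)ᶜ)
    -- `σ` is the involution obtained by deleting the zero rows and columns
    (σ : Equiv.Perm (Fin (n - k))) (hinvol : σ * σ = 1)
    (hσ : ∀ i j : Fin (n - k), π (e i) (e j) = if σ j = i then 1 else 0) :
    Dpar π =
      (excNum σ + invNum σ) / 2 + ∑ t : Fin k, (n + 1 - ((z t : ℕ) + 1)) := by
  classical
  obtain ⟨h01, hrow, hcol⟩ := hperm
  have hσσ : ∀ x, σ (σ x) = x := fun x => by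
    have := congrArg (fun τ : Equiv.Perm (Fin (n - k)) => τ x) hinvol
    simpa using this
  have hzrow : ∀ (t : Fin k) (j : Fin n), π (z t) j = 0 := fun t j =>
    (hzero (z t)).2 ⟨t, rfl⟩ j
  have hzne : ∀ (t : Fin k) (a : Fin (n - k)), z t ≠ e a := by
    intro t a h
    have h1 : e a ∈ (Set.range z)ᶜ := herange ▸ Set.mem_range_self a
    exact h1 ⟨t, h⟩
  have hone : ∀ a, π (e a) (e (σ a)) = 1 := fun a => by
    rw [hσ]; simp [hσσ]
  have hPe0 : ∀ (a : Fin (n - k)) (c : Fin n), c ≠ e (σ a) → π (e a) c = 0 := by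
    intro a c hc
    by_cases hz : c ∈ Set.range z
    · obtain ⟨t, rfl⟩ := hz
      rw [← hsym.apply]
      exact hzrow t (e a)
    · have h1 : c ∈ Set.range e := by rw [herange]; exact hz
      obtain ⟨d, rfl⟩ := h1
      rw [hσ]
      have : σ d ≠ a := by
        intro h
        exact hc (by rw [← h, hσσ])
      simp [this]
  -- the key predicate: row `a` has no ones in columns `≤ b`
  set P : Fin n → Fin n → Prop := fun a b => ∀ c : Fin n, c ≤ b → π a c = 0 with hP
  have hPz : ∀ (t : Fin k) (b : Fin n), P (z t) b := fun t b c _ => hzrow t c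
  have hPeIff : ∀ (a : Fin (n - k)) (b : Fin n), P (e a) b ↔ b < e (σ a) := by
    intro a b
    constructor
    · intro h
      by_contra hlt
      push_neg at hlt
      have h2 := h (e (σ a)) hlt
      rw [hone] at h2
      norm_num at h2
    · intro h c hc
      refine hPe0 a c fun heq => ?_
      rw [heq] at hc
      exact absurd (lt_of_le_of_lt hc h) (lt_irrefl _)
  set Q : Fin n × Fin n → Prop := fun p => p.1 ≤ p.2 ∧ P p.1 p.2 ∧ P p.2 p.1 with hQ
  -- Step 1 : Dpar π counts the pairs satisfying Q
  have hD : Dpar π = (Finset.univ.filter Q).card := by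
    rw [Dpar]
    refine Finset.card_bij'
      (fun p hp => ((⟨p.1 - 1, by simp at hp; omega⟩ : Fin n),
                    (⟨p.2 - 1, by simp at hp; omega⟩ : Fin n)))
      (fun q _ => ((q.1 : ℕ) + 1, (q.2 : ℕ) + 1)) ?_ ?_ ?_ ?_
    · intro p hp
      simp only [Finset.mem_filter, Finset.mem_product, Finset.mem_Icc] at hp
      obtain ⟨⟨⟨hp11, hp12⟩, hp21, hp22⟩, hle, hrc⟩ := hp
      set a : Fin n := ⟨p.1 - 1, by omega⟩
      set b : Fin n := ⟨p.2 - 1, by omega⟩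
      have ha : (a : ℕ) + 1 = p.1 := by simp [a]; omega
      have hb : (b : ℕ) + 1 = p.2 := by simp [b]; omega
      rw [← ha, ← hb] at hrc
      have hs : (a:ℕ) + 1 - 1 = (a:ℕ) := rfl
      rw [hs] at hrc
      have ht : (b:ℕ) + 1 - 1 = (b:ℕ) := rfl
      rw [ht] at hrc
      rw [rc_step π h01 hrow hcol a b] at hrc
      simp only [Finset.mem_filter, Finset.mem_univ, true_and, hQ]
      refine ⟨?_, ?_, ?_⟩
      · show a ≤ b
        rw [Fin.le_def]
        simp [a, b]; omega
      · intro c hc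
        exact hrc.1 c (by rw [Fin.le_def] at hc; simpa using hc)
      · intro c hc
        rw [hsym.apply]
        exact hrc.2 c (by rw [Fin.le_def] at hc; simp at hc; omega)
    · intro q hq
      simp only [Finset.mem_filter, Finset.mem_univ, true_and, hQ] at hq
      obtain ⟨hle, hq1, hq2⟩ := hq
      simp only [Finset.mem_filter, Finset.mem_product, Finset.mem_Icc]
      refine ⟨⟨⟨by omega, by omega⟩, by omega, by omega⟩, by
        rw [Fin.le_def] at hle; omega, ?_⟩
      have hs : (q.1:ℕ) + 1 - 1 = (q.1:ℕ) := rfl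
      have ht : (q.2:ℕ) + 1 - 1 = (q.2:ℕ) := rfl
      rw [hs, ht, rc_step π h01 hrow hcol q.1 q.2]
      constructor
      · intro c hc
        exact hq1 c (by rw [Fin.le_def]; omega)
      · intro c hc
        rw [← hsym.apply]
        exact hq2 c (by rw [Fin.le_def]; omega)
    · intro p hp
      simp only [Finset.mem_filter, Finset.mem_product, Finset.mem_Icc] at hp
      obtain ⟨⟨⟨hp11, hp12⟩, hp21, hp22⟩, _⟩ := hp
      simp only []
      ext <;> simp <;> omega
    · intro q hq
      simp only []
      ext <;> simp
  -- Step 2 : reindex `Fin n` by `Fin k ⊕ Fin (n - k)`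
  have hbij : Function.Bijective (Sum.elim z e : Fin k ⊕ Fin (n - k) → Fin n) := by
    constructor
    · rintro (s | a) (t | b) h
      · simp only [Sum.elim_inl] at h
        exact congrArg Sum.inl (hzmono.injective h)
      · exact absurd h (hzne s b)
      · exact absurd h.symm (hzne t a)
      · simp only [Sum.elim_inr] at h
        exact congrArg Sum.inr (hemono.injective h)
    · intro i
      by_cases h : i ∈ Set.range z
      · obtain ⟨t, ht⟩ := h; exact ⟨Sum.inl t, ht⟩
      · have h1 : i ∈ Set.range e := by rw [herange]; exact h
        obtain ⟨a, ha⟩ := h1; exact ⟨Sum.inr a, ha⟩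
  have hre : ∀ g : Fin n → ℕ, ∑ i : Fin n, g i
      = ∑ s : Fin k, g (z s) + ∑ a : Fin (n - k), g (e a) := by
    intro g
    rw [← Fintype.sum_bijective _ hbij (fun u => g (Sum.elim z e u)) g (fun u => rfl),
      Fintype.sum_sum_type]
    simp only [Sum.elim_inl, Sum.elim_inr]
  -- characterizations of Q on the four blocks
  have hQzz : ∀ s t, Q (z s, z t) ↔ s ≤ t := by
    intro s t
    simp only [hQ]
    exact ⟨fun ⟨h, _, _⟩ => hzmono.le_iff_le.1 h,
      fun h => ⟨hzmono.monotone h, hPz _ _, hPz _ _⟩⟩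
  have hQze : ∀ s b, Q (z s, e b) ↔ (z s < e b ∧ z s < e (σ b)) := by
    intro s b
    simp only [hQ]
    exact ⟨fun ⟨h1, _, h3⟩ => ⟨h1.lt_of_ne (hzne s b), (hPeIff b (z s)).1 h3⟩,
      fun ⟨h1, h2⟩ => ⟨h1.le, hPz s _, (hPeIff b (z s)).2 h2⟩⟩
  have hQez : ∀ a t, Q (e a, z t) ↔ (e a < z t ∧ z t < e (σ a)) := by
    intro a t
    simp only [hQ]
    exact ⟨fun ⟨h1, h2, _⟩ => ⟨h1.lt_of_ne fun h => hzne t a h.symm, (hPeIff a (z t)).1 h2⟩,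
      fun ⟨h1, h2⟩ => ⟨h1.le, (hPeIff a (z t)).2 h2, hPz t _⟩⟩
  have hQee : ∀ a b, Q (e a, e b) ↔ (a ≤ b ∧ b < σ a ∧ a < σ b) := by
    intro a b
    simp only [hQ]
    constructor
    · rintro ⟨h1, h2, h3⟩
      exact ⟨hemono.le_iff_le.1 h1, hemono.lt_iff_lt.1 ((hPeIff a (e b)).1 h2),
        hemono.lt_iff_lt.1 ((hPeIff b (e a)).1 h3)⟩
    · rintro ⟨h1, h2, h3⟩
      exact ⟨hemono.monotone h1, (hPeIff a (e b)).2 (hemono h2), (hPeIff b (e a)).2 (hemono h3)⟩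
  -- split the count into four sums
  have hsplit : (Finset.univ.filter Q).card =
      (∑ s : Fin k, ∑ t : Fin k, if Q (z s, z t) then 1 else 0)
    + ((∑ s : Fin k, ∑ b : Fin (n - k), if Q (z s, e b) then 1 else 0)
    + ((∑ a : Fin (n - k), ∑ t : Fin k, if Q (e a, z t) then 1 else 0)
    + (∑ a : Fin (n - k), ∑ b : Fin (n - k), if Q (e a, e b) then 1 else 0))) := by
    rw [Finset.card_filter, Fintype.sum_prod_type]
    calc ∑ i : Fin n, ∑ j : Fin n, (if Q (i, j) then 1 else 0)
        = ∑ i : Fin n, ((∑ t : Fin k, if Q (i, z t) then 1 else 0)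
            + ∑ b : Fin (n - k), if Q (i, e b) then 1 else 0) :=
          Finset.sum_congr rfl fun i _ => hre _
      _ = (∑ s : Fin k, ((∑ t : Fin k, if Q (z s, z t) then 1 else 0)
            + ∑ b : Fin (n - k), if Q (z s, e b) then 1 else 0))
          + (∑ a : Fin (n - k), ((∑ t : Fin k, if Q (e a, z t) then 1 else 0)
            + ∑ b : Fin (n - k), if Q (e a, e b) then 1 else 0)) := hre _
      _ = _ := by rw [Finset.sum_add_distrib, Finset.sum_add_distrib]; ring
  -- the four sums
  have hS1 : (∑ s : Fin k, ∑ t : Fin k, if Q (z s, z t) then 1 else 0)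
      = ∑ s : Fin k, (k - (s : ℕ)) := by
    refine Finset.sum_congr rfl fun s _ => ?_
    have h1 : (∑ t : Fin k, if Q (z s, z t) then 1 else 0)
        = ∑ t : Fin k, if s ≤ t then 1 else 0 :=
      Finset.sum_congr rfl fun t _ => if_congr (hQzz s t) rfl rfl
    rw [h1, ← Finset.card_filter]
    have h2 : Finset.univ.filter (fun t : Fin k => s ≤ t) = Finset.Ici s := by
      ext t; simp
    rw [h2, Fin.card_Ici]
  have hS2 : (∑ s : Fin k, ∑ b : Fin (n - k), if Q (z s, e b) then 1 else 0)
      = ∑ t : Fin k, ∑ b : Fin (n - k), if z t < e b ∧ z t < e (σ b) then 1 else 0 :=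
    Finset.sum_congr rfl fun s _ => Finset.sum_congr rfl fun b _ =>
      if_congr (hQze s b) rfl rfl
  have hS3 : (∑ a : Fin (n - k), ∑ t : Fin k, if Q (e a, z t) then 1 else 0)
      = ∑ t : Fin k, ∑ b : Fin (n - k), if z t < e b ∧ e (σ b) < z t then 1 else 0 := by
    have h1 : (∑ a : Fin (n - k), ∑ t : Fin k, if Q (e a, z t) then 1 else 0)
        = ∑ t : Fin k, ∑ a : Fin (n - k), if e a < z t ∧ z t < e (σ a) then 1 else 0 := by
      rw [Finset.sum_comm]
      exact Finset.sum_congr rfl fun t _ => Finset.sum_congr rfl fun a _ =>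
        if_congr (hQez a t) rfl rfl
    rw [h1]
    refine Finset.sum_congr rfl fun t _ => ?_
    rw [← Equiv.sum_comp σ (fun a => if e a < z t ∧ z t < e (σ a) then 1 else 0)]
    refine Finset.sum_congr rfl fun b _ => ?_
    simp only [hσσ]
    exact if_congr and_comm rfl rfl
  have hS23 : (∑ t : Fin k, ∑ b : Fin (n - k), if z t < e b ∧ z t < e (σ b) then 1 else 0)
      + (∑ t : Fin k, ∑ b : Fin (n - k), if z t < e b ∧ e (σ b) < z t then 1 else 0)
      = ∑ t : Fin k, ∑ b : Fin (n - k), if z t < e b then 1 else 0 := by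
    rw [← Finset.sum_add_distrib]
    refine Finset.sum_congr rfl fun t _ => ?_
    rw [← Finset.sum_add_distrib]
    refine Finset.sum_congr rfl fun b _ => ?_
    rcases (hzne t (σ b)).lt_or_gt with h | h
    · by_cases h2 : z t < e b <;> simp [h, h2, lt_asymm h]
    · by_cases h2 : z t < e b <;> simp [h, h2, lt_asymm h]
  have hcnt : ∀ t : Fin k, (k - (t : ℕ))
      + (∑ b : Fin (n - k), if z t < e b then 1 else 0) = n + 1 - ((z t : ℕ) + 1) := by
    intro t
    have h1 : (∑ s : Fin k, if z t < z s then 1 else 0)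
        + (∑ b : Fin (n - k), if z t < e b then 1 else 0)
        = ∑ i : Fin n, if z t < i then 1 else 0 :=
      (hre (fun i => if z t < i then 1 else 0)).symm
    have h2 : (∑ s : Fin k, if z t < z s then 1 else 0) = k - 1 - (t : ℕ) := by
      have h2' : (∑ s : Fin k, if z t < z s then 1 else 0)
          = ∑ s : Fin k, if t < s then 1 else 0 :=
        Finset.sum_congr rfl fun s _ => if_congr hzmono.lt_iff_lt rfl rfl
      rw [h2', ← Finset.card_filter]
      have h2'' : Finset.univ.filter (fun s : Fin k => t < s) = Finset.Ioi t := by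
        ext s; simp
      rw [h2'', Fin.card_Ioi]
    have h3 : (∑ i : Fin n, if z t < i then 1 else 0) = n - 1 - (z t : ℕ) := by
      rw [← Finset.card_filter]
      have h3' : Finset.univ.filter (fun i : Fin n => z t < i) = Finset.Ioi (z t) := by
        ext i; simp
      rw [h3', Fin.card_Ioi]
    have h4 : (t : ℕ) < k := t.isLt
    have h5 : (z t : ℕ) < n := (z t).isLt
    omega
  -- the involution part
  set Aset := Finset.univ.filter
    (fun p : Fin (n - k) × Fin (n - k) => p.1 ≤ p.2 ∧ p.2 < σ p.1 ∧ p.1 < σ p.2) with hAs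
  have hS4 : (∑ a : Fin (n - k), ∑ b : Fin (n - k), if Q (e a, e b) then 1 else 0)
      = Aset.card := by
    rw [hAs, Finset.card_filter, Fintype.sum_prod_type]
    exact Finset.sum_congr rfl fun a _ => Finset.sum_congr rfl fun b _ =>
      if_congr (hQee a b) rfl rfl
  have h2A : 2 * Aset.card = excNum σ + invNum σ := by
    set A' := Finset.univ.filter
      (fun p : Fin (n - k) × Fin (n - k) => p.2 ≤ p.1 ∧ p.2 < σ p.1 ∧ p.1 < σ p.2) with hA'
    set B := Finset.univ.filter
      (fun p : Fin (n - k) × Fin (n - k) => p.2 < σ p.1 ∧ p.1 < σ p.2) with hBs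
    set D := Finset.univ.filter
      (fun p : Fin (n - k) × Fin (n - k) => p.1 = p.2 ∧ p.2 < σ p.1 ∧ p.1 < σ p.2) with hDs
    have hswap : Aset.card = A'.card := by
      refine Finset.card_bij' (fun p _ => (p.2, p.1)) (fun p _ => (p.2, p.1)) ?_ ?_ ?_ ?_
      · intro p hp
        simp only [hAs, Finset.mem_filter, Finset.mem_univ, true_and] at hp
        simp only [hA', Finset.mem_filter, Finset.mem_univ, true_and]
        exact ⟨hp.1, hp.2.2, hp.2.1⟩
      · intro p hp
        simp only [hA', Finset.mem_filter, Finset.mem_univ, true_and] at hp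
        simp only [hAs, Finset.mem_filter, Finset.mem_univ, true_and]
        exact ⟨hp.1, hp.2.2, hp.2.1⟩
      · intro p _; rfl
      · intro p _; rfl
    have hunion : Aset ∪ A' = B := by
      ext p
      simp only [hAs, hA', hBs, Finset.mem_union, Finset.mem_filter, Finset.mem_univ, true_and]
      constructor
      · rintro (⟨_, h⟩ | ⟨_, h⟩) <;> exact h
      · intro h
        rcases le_total p.1 p.2 with h1 | h1
        · exact Or.inl ⟨h1, h⟩
        · exact Or.inr ⟨h1, h⟩
    have hinter : Aset ∩ A' = D := by
      ext p
      simp only [hAs, hA', hDs, Finset.mem_inter, Finset.mem_filter, Finset.mem_univ, true_and]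
      constructor
      · rintro ⟨⟨h1, h⟩, ⟨h2, _⟩⟩
        exact ⟨le_antisymm h1 h2, h⟩
      · rintro ⟨h1, h⟩
        exact ⟨⟨le_of_eq h1, h⟩, ⟨le_of_eq h1.symm, h⟩⟩
    have hcardsum : B.card + D.card = Aset.card + A'.card := by
      rw [← hunion, ← hinter]
      exact Finset.card_union_add_card_inter _ _
    have hDexc : D.card = excNum σ := by
      rw [excNum]
      refine Finset.card_bij' (fun p _ => p.1) (fun a _ => (a, a)) ?_ ?_ ?_ ?_
      · intro p hp
        simp only [hDs, Finset.mem_filter, Finset.mem_univ, true_and] at hp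
        simp only [Finset.mem_filter, Finset.mem_univ, true_and]
        obtain ⟨h1, h2, _⟩ := hp
        rw [h1]
        rw [h1] at h2
        exact h2
      · intro a ha
        simp only [Finset.mem_filter, Finset.mem_univ, true_and] at ha
        simp [hDs, ha]
      · intro p hp
        simp only [hDs, Finset.mem_filter, Finset.mem_univ, true_and] at hp
        exact Prod.ext rfl hp.1
      · intro a _; rfl
    have hBinv : B.card = invNum σ := by
      rw [invNum]
      refine Finset.card_bij' (fun p _ => (p.1, σ p.2)) (fun q _ => (q.1, σ q.2)) ?_ ?_ ?_ ?_
      · intro p hp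
        simp only [hBs, Finset.mem_filter, Finset.mem_univ, true_and] at hp
        simp only [Finset.mem_filter, Finset.mem_univ, true_and]
        exact ⟨hp.2, by rw [hσσ]; exact hp.1⟩
      · intro q hq
        simp only [Finset.mem_filter, Finset.mem_univ, true_and] at hq
        simp only [hBs, Finset.mem_filter, Finset.mem_univ, true_and]
        exact ⟨hq.2, by rw [hσσ]; exact hq.1⟩
      · intro p _
        exact Prod.ext rfl (hσσ _)
      · intro q _
        exact Prod.ext rfl (hσσ _)
    omega
  have hS4' : (∑ a : Fin (n - k), ∑ b : Fin (n - k), if Q (e a, e b) then 1 else 0)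
      = (excNum σ + invNum σ) / 2 := by
    rw [hS4]; omega
  -- put everything together
  rw [hD, hsplit, hS1, hS2, hS3, hS4']
  have hfin : (∑ s : Fin k, (k - (s : ℕ)))
      + (∑ t : Fin k, ∑ b : Fin (n - k), if z t < e b then 1 else 0)
      = ∑ t : Fin k, (n + 1 - ((z t : ℕ) + 1)) := by
    rw [← Finset.sum_add_distrib]
    exact Finset.sum_congr rfl fun t _ => hcnt t
  omega
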